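/- For every integer j ≥ 1 and every real k > 0, ∫_ℝ (1 + tanh t)^j (log(1 + e^{−2t}))^k dt = 2^{j−1} Γ(k+1) ( ζ(k+1) − Σ_{n=1}^{j−1} n^{−k−1} ), where Γ is the Gamma function and ζ is the Riemann zeta function (the sum is empty for j = 1). -/

import Mathlib

/-!
Substituting `u = log (1 + e^{-2t})`, a decreasing bijection of `ℝ` onto `(0, ∞)`, turns
`1 + tanh t` into `2 e^{-u}` and `dt` into `du / (2 (1 - e^{-u}))`, so the integral becomes
`2^{j-1} ∫₀^∞ u^k e^{-ju} / (1 - e^{-u}) du`. Expanding `1 / (1 - e^{-u})` as a geometric series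
and integrating termwise gives `2^{j-1} Γ(k+1) ∑_{m ≥ 0} (m + j)^{-(k+1)}`, a tail of `ζ(k+1)`.
-/

open MeasureTheory Real Set

lemma one_add_tanh_eq_two_mul_exp_neg_log (t : ℝ) :
    1 + tanh t = 2 * exp (-log (1 + exp (-2 * t))) := by
  have hpos : 0 < 1 + exp (-2 * t) := by positivity
  have hsq : exp (-2 * t) = exp (-t) * exp (-t) := by rw [← exp_add]; ring_nf
  have hinv : exp t * exp (-t) = 1 := by rw [← exp_add]; simp
  rw [exp_neg, exp_log hpos, tanh_eq, hsq]
  field_simp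
  linear_combination 2 * exp (-t) * hinv

lemma log_one_add_exp_neg_two_mul_pos (t : ℝ) : 0 < log (1 + exp (-2 * t)) :=
  log_pos (by linarith [exp_pos (-2 * t)])

lemma hasDerivAt_log_one_add_exp_neg_two_mul (t : ℝ) :
    HasDerivAt (fun t ↦ log (1 + exp (-2 * t)))
      (-2 * (1 - exp (-log (1 + exp (-2 * t))))) t := by
  have hpos : 0 < 1 + exp (-2 * t) := by positivity
  have hlin : HasDerivAt (fun t : ℝ ↦ -2 * t) (-2) t := by
    simpa using (hasDerivAt_id t).const_mul (-2)
  convert ((hlin.exp).const_add 1).log hpos.ne' using 1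
  rw [exp_neg, exp_log hpos]
  field_simp
  ring

lemma strictAnti_log_one_add_exp_neg_two_mul :
    StrictAnti (fun t : ℝ ↦ log (1 + exp (-2 * t))) := fun a b hab ↦ by
  have : exp (-2 * b) < exp (-2 * a) := exp_lt_exp.mpr (by linarith)
  exact log_lt_log (by positivity) (by linarith)

lemma range_log_one_add_exp_neg_two_mul :
    range (fun t : ℝ ↦ log (1 + exp (-2 * t))) = Ioi 0 := by
  refine Subset.antisymm (range_subset_iff.mpr log_one_add_exp_neg_two_mul_pos) fun u hu ↦ ?_
  have hexp : 0 < exp u - 1 := sub_pos.mpr (one_lt_exp_iff.mpr hu)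
  refine ⟨-log (exp u - 1) / 2, ?_⟩
  simp only
  rw [show -2 * (-log (exp u - 1) / 2) = log (exp u - 1) by ring, exp_log hexp,
    add_sub_cancel, log_exp]

lemma integral_Ioi_eq_integral_comp_log_one_add_exp_neg_two_mul (G : ℝ → ℝ) :
    ∫ u in Ioi 0, G u =
      ∫ t, 2 * (1 - exp (-log (1 + exp (-2 * t)))) * G (log (1 + exp (-2 * t))) := by
  rw [← range_log_one_add_exp_neg_two_mul, ← image_univ,
    integral_image_eq_integral_abs_deriv_smul MeasurableSet.univ
      (fun t _ ↦ (hasDerivAt_log_one_add_exp_neg_two_mul t).hasDerivWithinAt)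
      strictAnti_log_one_add_exp_neg_two_mul.injective.injOn G, Measure.restrict_univ]
  congr with t
  have : exp (-log (1 + exp (-2 * t))) < 1 :=
    exp_lt_one_iff.mpr (neg_lt_zero.mpr (log_one_add_exp_neg_two_mul_pos t))
  rw [smul_eq_mul, abs_of_neg (by linarith)]
  ring

lemma integral_rpow_mul_exp_neg_mul_Ioi' {k b : ℝ} (hk : -1 < k) (hb : 0 < b) :
    ∫ u in Ioi 0, u ^ k * exp (-(b * u)) = Gamma (k + 1) * b ^ (-(k + 1)) := by
  have h := integral_rpow_mul_exp_neg_mul_Ioi (by linarith : 0 < k + 1) hb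
  rw [add_sub_cancel_right] at h
  rw [h, one_div, inv_rpow hb.le, ← rpow_neg hb.le, mul_comm]

lemma summable_nat_add_rpow_neg {a s : ℝ} (ha : 0 ≤ a) (hs : 1 < s) :
    Summable (fun n : ℕ ↦ (n + a) ^ (-s)) := by
  refine ((summable_one_div_nat_add_rpow a s).mpr hs).congr fun n ↦ ?_
  rw [abs_of_nonneg (by positivity), rpow_neg (by positivity), one_div]

lemma hasSum_exp_neg_nat_add_mul {a u : ℝ} (hu : 0 < u) :
    HasSum (fun m : ℕ ↦ exp (-((m + a) * u))) (exp (-(a * u)) / (1 - exp (-u))) := by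
  have hgeo := hasSum_geometric_of_lt_one (exp_pos (-u)).le (exp_lt_one_iff.mpr (by linarith))
  have hterm : (fun m : ℕ ↦ exp (-((m + a) * u))) = fun m ↦ exp (-(a * u)) * exp (-u) ^ m := by
    ext m
    rw [← exp_nat_mul, ← exp_add]
    ring_nf
  rw [div_eq_mul_inv, hterm]
  exact hgeo.mul_left _

/-- The Hurwitz zeta function `ζ(k + 1, a)` as a Mellin transform. -/
lemma integral_rpow_mul_exp_neg_mul_div_one_sub_exp_neg {k a : ℝ} (hk : 0 < k) (ha : 0 < a) :
    ∫ u in Ioi 0, u ^ k * exp (-(a * u)) / (1 - exp (-u)) =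
      Gamma (k + 1) * ∑' m : ℕ, (m + a) ^ (-(k + 1)) := by
  have hb (m : ℕ) : 0 < (m : ℝ) + a := by positivity
  have hterm (m : ℕ) := integral_rpow_mul_exp_neg_mul_Ioi' (by linarith : -1 < k) (hb m)
  have hint (m : ℕ) : IntegrableOn (fun u ↦ u ^ k * exp (-((m + a) * u))) (Ioi 0) := by
    simpa only [rpow_one, neg_mul] using
      integrableOn_rpow_mul_exp_neg_mul_rpow (by linarith : -1 < k) zero_lt_one (hb m)
  have hnorm (m : ℕ) : ∫ u in Ioi 0, ‖u ^ k * exp (-((m + a) * u))‖ =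
      ∫ u in Ioi 0, u ^ k * exp (-((m + a) * u)) :=
    setIntegral_congr_fun measurableSet_Ioi fun u (hu : 0 < u) ↦
      norm_of_nonneg (mul_nonneg (rpow_nonneg hu.le k) (exp_pos _).le)
  rw [setIntegral_congr_fun measurableSet_Ioi fun u hu ↦ by
      rw [mul_div_assoc, ← ((hasSum_exp_neg_nat_add_mul hu).mul_left (u ^ k)).tsum_eq],
    ← integral_tsum_of_summable_integral_norm hint, tsum_congr hterm, tsum_mul_left]
  simp_rw [hnorm, hterm]
  exact (summable_nat_add_rpow_neg ha.le (by linarith : 1 < k + 1)).mul_left _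

lemma tsum_nat_add_succ_rpow_neg {s : ℝ} (hs : 1 < s) (i : ℕ) :
    ∑' m : ℕ, ((m : ℝ) + (i + 1)) ^ (-s) =
      ∑' n : ℕ, ((n : ℝ) + 1) ^ (-s) - ∑ n ∈ Finset.range i, ((n : ℝ) + 1) ^ (-s) := by
  have h := (summable_nat_add_rpow_neg zero_le_one hs).sum_add_tsum_nat_add i
  push_cast [add_assoc] at h
  linarith

/-- The explicit zeta-function integral:
`∫_ℝ (1 + tanh t)^j (log(1 + e^{-2t}))^k dt
  = 2^{j-1} Γ(k+1) (ζ(k+1) - Σ_{n=1}^{j-1} n^{-k-1})`. -/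
theorem zeta_integral (j : ℕ) (hj : 1 ≤ j) (k : ℝ) (hk : 0 < k) :
    (∫ t : ℝ, (1 + Real.tanh t) ^ j * (Real.log (1 + exp (-2 * t))) ^ k) =
      2 ^ (j - 1) * Real.Gamma (k + 1) *
        ((∑' n : ℕ, ((n : ℝ) + 1) ^ (-(k + 1))) -
          ∑ n ∈ Finset.range (j - 1), ((n : ℝ) + 1) ^ (-(k + 1))) := by
  obtain ⟨i, rfl⟩ := Nat.exists_eq_add_of_le' hj
  have hpointwise (u : ℝ) (hu : 0 < u) :
      (2 * exp (-u)) ^ (i + 1) * u ^ k =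
        2 * (1 - exp (-u)) * (2 ^ i * (u ^ k * exp (-((i + 1) * u)) / (1 - exp (-u)))) := by
    have : 1 - exp (-u) ≠ 0 := (sub_pos.mpr (exp_lt_one_iff.mpr (by linarith))).ne'
    rw [show -(((i : ℝ) + 1) * u) = (i + 1 : ℕ) * -u by push_cast; ring, exp_nat_mul]
    field_simp
    ring
  rw [Nat.add_sub_cancel, mul_assoc, ← tsum_nat_add_succ_rpow_neg (by linarith) i,
    ← integral_rpow_mul_exp_neg_mul_div_one_sub_exp_neg hk (by positivity), ← integral_const_mul,
    integral_Ioi_eq_integral_comp_log_one_add_exp_neg_two_mul]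
  congr with t
  rw [one_add_tanh_eq_two_mul_exp_neg_log, hpointwise _ (log_one_add_exp_neg_two_mul_pos t)]
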